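/- Let μ be an entire, finite, nondegenerate, nonlocalized, irreducible projection and Γ ∈ M_{ℓ,K}(ℤ) a nonzero matrix with nonnegative entries. If θ, θ′ ∈ ℝ^K are both critical, Γ-equivalent, and Γ X_θ and Γ X_{θ′} are collinear, then θ = θ′. In particular (taking Γ = I_K), distinct critical tiltings have distinct asymptotic directions. -/

import Mathlib

open scoped BigOperators

/-- Spectral radius of a real square matrix. -/
noncomputable def matrixSpectralRadius {n : ℕ} (M : Matrix (Fin n) (Fin n) ℝ) : ℝ :=
  sSup ((fun z : ℂ => ‖z‖) '' spectrum ℂ (M.map (Complex.ofReal)))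

open Real Matrix

/-! Write `Λᵢ(t) = log ∑ₖ μᵢ(k) e^⟨t,k⟩`, so that `χ(t) = Λ(t) - t` and the tilted mean matrix
`M_t` is the Jacobian of `Λ` at `t`. Jensen's inequality for `exp` under the tilted measure gives
the tangent bound `Λ(u) ≥ Λ(t) + M_t (u - t)`, strict in some coordinate when `u ≠ t` because `μ` is
nonlocalized. Pairing with the positive left eigenvector `X_t` of `M_t` yields
`X_t ⬝ χ(t) < X_t ⬝ χ(u)`. Applied to `(θ, θ')` and `(θ', θ)` with `χ(θ) - χ(θ') = Γᵀ R`, this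
says `R ⬝ ΓX_θ < 0 < R ⬝ ΓX_θ'`, impossible for collinear vectors with nonnegative entries. -/

lemma exp_mul_one_add_sub_lt {m x : ℝ} (h : x ≠ m) : exp m * (1 + (x - m)) < exp x := by
  calc exp m * (1 + (x - m)) < exp m * exp (x - m) := by
        gcongr
        linarith [add_one_lt_exp (sub_ne_zero.2 h)]
    _ = exp x := by rw [← exp_add, add_sub_cancel]

lemma exp_mul_one_add_sub_le (m x : ℝ) : exp m * (1 + (x - m)) ≤ exp x := by
  rcases eq_or_ne x m with rfl | h
  · simp
  · exact (exp_mul_one_add_sub_lt h).le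

section Jensen

variable {ι : Type*} {a w : ι → ℝ}

lemma summable_mul_exp_tangent (ha : Summable a) (haw : Summable fun i => a i * w i) (m : ℝ) :
    Summable fun i => a i * (exp m * (1 + (w i - m))) :=
  (((ha.mul_left (1 - m)).add haw).mul_left (exp m)).congr fun i => by ring

lemma tsum_mul_exp_tangent_at_mean (ha : Summable a) (haw : Summable fun i => a i * w i)
    (hA : ∑' i, a i ≠ 0) (m : ℝ) (hm : m = (∑' i, a i * w i) / ∑' i, a i) :
    ∑' i, a i * (exp m * (1 + (w i - m))) = (∑' i, a i) * exp m := by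
  have hsplit : ∀ i, a i * (exp m * (1 + (w i - m))) = exp m * ((1 - m) * a i + a i * w i) :=
    fun i => by ring
  rw [tsum_congr hsplit, tsum_mul_left, (ha.mul_left _).tsum_add haw, tsum_mul_left, hm]
  field_simp
  ring

lemma mul_exp_mean_le_tsum_mul_exp (ha0 : 0 ≤ a) (ha : Summable a)
    (haw : Summable fun i => a i * w i) (hae : Summable fun i => a i * exp (w i)) :
    (∑' i, a i) * exp ((∑' i, a i * w i) / ∑' i, a i) ≤ ∑' i, a i * exp (w i) := by
  rcases eq_or_ne (∑' i, a i) 0 with hA | hA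
  · rw [hA, zero_mul]
    exact tsum_nonneg fun i => mul_nonneg (ha0 i) (exp_pos _).le
  set m := (∑' i, a i * w i) / ∑' i, a i
  calc (∑' i, a i) * exp m = ∑' i, a i * (exp m * (1 + (w i - m))) :=
        (tsum_mul_exp_tangent_at_mean ha haw hA m rfl).symm
    _ ≤ ∑' i, a i * exp (w i) :=
        Summable.tsum_le_tsum (fun i => mul_le_mul_of_nonneg_left (exp_mul_one_add_sub_le _ _)
          (ha0 i)) (summable_mul_exp_tangent ha haw m) hae

lemma mul_exp_mean_lt_tsum_mul_exp (ha0 : 0 ≤ a) (ha : Summable a)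
    (haw : Summable fun i => a i * w i) (hae : Summable fun i => a i * exp (w i))
    (hw : ∃ i j, 0 < a i ∧ 0 < a j ∧ w i ≠ w j) :
    (∑' i, a i) * exp ((∑' i, a i * w i) / ∑' i, a i) < ∑' i, a i * exp (w i) := by
  obtain ⟨i, j, hi, hj, hij⟩ := hw
  have hA : ∑' i, a i ≠ 0 := (ha.tsum_pos ha0 i hi).ne'
  set m := (∑' i, a i * w i) / ∑' i, a i
  obtain ⟨k, hk, hkm⟩ : ∃ k, 0 < a k ∧ w k ≠ m := by
    by_contra! h
    exact hij ((h i hi).trans (h j hj).symm)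
  calc (∑' i, a i) * exp m = ∑' i, a i * (exp m * (1 + (w i - m))) :=
        (tsum_mul_exp_tangent_at_mean ha haw hA m rfl).symm
    _ < ∑' i, a i * exp (w i) :=
        Summable.tsum_lt_tsum (i := k) (fun i => mul_le_mul_of_nonneg_left
          (exp_mul_one_add_sub_le _ _) (ha0 i)) (mul_lt_mul_of_pos_left
          (exp_mul_one_add_sub_lt hkm) hk) (summable_mul_exp_tangent ha haw m) hae

end Jensen

lemma exists_pos_of_hasSum {ι : Type*} {f : ι → ℝ} {a : ℝ} (hf : 0 ≤ f) (h : HasSum f a)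
    (ha : a ≠ 0) : ∃ i, 0 < f i := by
  by_contra! hle
  have hf0 : f = 0 := funext fun i => le_antisymm (hle i) (hf i)
  exact ha (h.unique (hf0 ▸ hasSum_zero))

lemma prod_exp_pow_eq_exp_sum {κ : Type*} [Fintype κ] (t : κ → ℝ) (k : κ → ℕ) :
    ∏ j, exp (t j) ^ k j = exp (∑ l, t l * k l) := by
  rw [exp_sum]
  exact Finset.prod_congr rfl fun j _ => by rw [← exp_nat_mul, mul_comm]

section Partition

variable {κ : Type*} [Fintype κ]

noncomputable def partitionFn (μ : (κ → ℕ) → ℝ) (t : κ → ℝ) : ℝ :=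
  ∑' k, μ k * exp (∑ l, t l * k l)

noncomputable def tiltedMean (μ : (κ → ℕ) → ℝ) (t : κ → ℝ) (j : κ) : ℝ :=
  (∑' k, μ k * exp (∑ l, t l * k l) * k j) / partitionFn μ t

def HasFiniteExpMoments (μ : (κ → ℕ) → ℝ) : Prop :=
  ∀ t : κ → ℝ, Summable fun k => μ k * exp (∑ l, t l * k l)

variable {μ : (κ → ℕ) → ℝ}

lemma partitionFn_pos (hμ : 0 ≤ μ) (hent : HasFiniteExpMoments μ)
    (hpos : ∃ k, 0 < μ k) (t : κ → ℝ) : 0 < partitionFn μ t := by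
  obtain ⟨k, hk⟩ := hpos
  exact (hent t).tsum_pos (fun k => mul_nonneg (hμ k) (exp_pos _).le) k
    (mul_pos hk (exp_pos _))

lemma summable_mul_coord (hμ : 0 ≤ μ) (hent : HasFiniteExpMoments μ)
    (t : κ → ℝ) (j : κ) : Summable fun k => μ k * exp (∑ l, t l * k l) * k j := by
  classical
  refine (hent (t + Pi.single j 1)).of_nonneg_of_le
    (fun k => mul_nonneg (mul_nonneg (hμ k) (exp_pos _).le) (Nat.cast_nonneg _)) fun k => ?_
  have hexp : ∑ l, (t + Pi.single j 1 : κ → ℝ) l * k l = ∑ l, t l * k l + k j := by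
    simp [add_mul, Finset.sum_add_distrib, Pi.single_apply]
  rw [hexp, exp_add, ← mul_assoc]
  exact mul_le_mul_of_nonneg_left (by linarith [add_one_le_exp (k j : ℝ)])
    (mul_nonneg (hμ k) (exp_pos _).le)

lemma summable_mul_linear (hμ : 0 ≤ μ) (hent : HasFiniteExpMoments μ) (t c : κ → ℝ) :
    Summable fun k => μ k * exp (∑ l, t l * k l) * ∑ l, c l * k l := by
  simp only [Finset.mul_sum]
  exact summable_sum fun l _ => ((summable_mul_coord hμ hent t l).mul_left (c l)).congr
    fun k => by ring

lemma tsum_mul_linear_div_partitionFn (hμ : 0 ≤ μ) (hent : HasFiniteExpMoments μ)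
    (t c : κ → ℝ) :
    (∑' k, μ k * exp (∑ l, t l * k l) * ∑ l, c l * k l) / partitionFn μ t =
      ∑ l, tiltedMean μ t l * c l := by
  have hswap : ∀ k : κ → ℕ, μ k * exp (∑ l, t l * k l) * ∑ l, c l * k l =
      ∑ l, c l * (μ k * exp (∑ l, t l * k l) * k l) := fun k => by
    rw [Finset.mul_sum]
    exact Finset.sum_congr rfl fun l _ => by ring
  rw [tsum_congr hswap, Summable.tsum_finsetSum fun l _ =>
    (summable_mul_coord hμ hent t l).mul_left _, Finset.sum_div]
  exact Finset.sum_congr rfl fun l _ => by rw [tsum_mul_left, tiltedMean]; ring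

lemma mul_exp_sub_eq (t u : κ → ℝ) (k : κ → ℕ) :
    μ k * exp (∑ l, t l * k l) * exp (∑ l, (u l - t l) * k l) = μ k * exp (∑ l, u l * k l) := by
  rw [mul_assoc, ← exp_add, ← Finset.sum_add_distrib]
  exact congrArg _ (congrArg _ (Finset.sum_congr rfl fun l _ => by ring))

lemma partitionFn_mul_exp_le (hμ : 0 ≤ μ) (hent : HasFiniteExpMoments μ) (t u : κ → ℝ) :
    partitionFn μ t * exp (∑ l, tiltedMean μ t l * (u l - t l)) ≤ partitionFn μ u := by
  have h := mul_exp_mean_le_tsum_mul_exp (fun k => mul_nonneg (hμ k) (exp_pos _).le) (hent t)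
    (summable_mul_linear hμ hent t fun l => u l - t l)
    ((hent u).congr fun k => (mul_exp_sub_eq t u k).symm)
  rw [tsum_congr (mul_exp_sub_eq t u)] at h
  rwa [← tsum_mul_linear_div_partitionFn hμ hent t]

lemma partitionFn_mul_exp_lt (hμ : 0 ≤ μ) (hent : HasFiniteExpMoments μ) {t u : κ → ℝ}
    (h : ∃ k k', 0 < μ k ∧ 0 < μ k' ∧ ∑ l, (u l - t l) * k l ≠ ∑ l, (u l - t l) * k' l) :
    partitionFn μ t * exp (∑ l, tiltedMean μ t l * (u l - t l)) < partitionFn μ u := by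
  obtain ⟨k, k', hk, hk', hne⟩ := h
  have h := mul_exp_mean_lt_tsum_mul_exp (fun k => mul_nonneg (hμ k) (exp_pos _).le) (hent t)
    (summable_mul_linear hμ hent t fun l => u l - t l)
    ((hent u).congr fun k => (mul_exp_sub_eq t u k).symm)
    ⟨k, k', mul_pos hk (exp_pos _), mul_pos hk' (exp_pos _), hne⟩
  rw [tsum_congr (mul_exp_sub_eq t u)] at h
  rwa [← tsum_mul_linear_div_partitionFn hμ hent t]

lemma log_partitionFn_add_le (hμ : 0 ≤ μ) (hent : HasFiniteExpMoments μ) (hpos : ∃ k, 0 < μ k)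
    (t u : κ → ℝ) :
    log (partitionFn μ t) + ∑ l, tiltedMean μ t l * (u l - t l) ≤ log (partitionFn μ u) := by
  have hZ := partitionFn_pos hμ hent hpos t
  simpa only [log_mul hZ.ne' (exp_pos _).ne', log_exp] using
    log_le_log (by positivity) (partitionFn_mul_exp_le hμ hent t u)

lemma log_partitionFn_add_lt (hμ : 0 ≤ μ) (hent : HasFiniteExpMoments μ) {t u : κ → ℝ}
    (h : ∃ k k', 0 < μ k ∧ 0 < μ k' ∧ ∑ l, (u l - t l) * k l ≠ ∑ l, (u l - t l) * k' l) :
    log (partitionFn μ t) + ∑ l, tiltedMean μ t l * (u l - t l) < log (partitionFn μ u) := by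
  have ⟨k, _, hk, _⟩ := h
  have hZ := partitionFn_pos hμ hent ⟨k, hk⟩ t
  simpa only [log_mul hZ.ne' (exp_pos _).ne', log_exp] using
    log_lt_log (by positivity) (partitionFn_mul_exp_lt hμ hent h)

end Partition

noncomputable def logPartition {κ : Type*} [Fintype κ] (μ : κ → (κ → ℕ) → ℝ) (t : κ → ℝ) :
    κ → ℝ :=
  fun i => log (partitionFn (μ i) t)

theorem dotProduct_logPartition_sub_lt {κ : Type*} [Fintype κ] {μ : κ → (κ → ℕ) → ℝ}
    (hμ : ∀ i, 0 ≤ μ i) (hent : ∀ i, HasFiniteExpMoments (μ i)) (hpos : ∀ i, ∃ k, 0 < μ i k)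
    (hnonloc : ∀ Z : κ → ℝ, Z ≠ 0 →
      ∃ i k k', 0 < μ i k ∧ 0 < μ i k' ∧ ∑ j, Z j * k j ≠ ∑ j, Z j * k' j)
    {t u : κ → ℝ} (htu : t ≠ u) {M : Matrix κ κ ℝ} (hM : ∀ i j, M i j = tiltedMean (μ i) t j)
    {X : κ → ℝ} (hX : ∀ i, 0 < X i) (hXM : X ᵥ* M = X) :
    X ⬝ᵥ (logPartition μ t - t) < X ⬝ᵥ (logPartition μ u - u) := by
  obtain ⟨i₀, hi₀⟩ := hnonloc (u - t) (sub_ne_zero.2 htu.symm)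
  have hgrad : ∀ i, logPartition μ t i + (M *ᵥ (u - t)) i ≤ logPartition μ u i := fun i => by
    simpa only [mulVec, dotProduct, hM, logPartition, Pi.sub_apply] using
      log_partitionFn_add_le (hμ i) (hent i) (hpos i) t u
  have hgrad₀ : logPartition μ t i₀ + (M *ᵥ (u - t)) i₀ < logPartition μ u i₀ := by
    simpa only [mulVec, dotProduct, hM, logPartition, Pi.sub_apply] using
      log_partitionFn_add_lt (hμ i₀) (hent i₀) hi₀
  have hsum : X ⬝ᵥ (logPartition μ t + M *ᵥ (u - t)) < X ⬝ᵥ logPartition μ u :=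
    Finset.sum_lt_sum (fun i _ => mul_le_mul_of_nonneg_left (hgrad i) (hX i).le)
      ⟨i₀, Finset.mem_univ _, mul_lt_mul_of_pos_left hgrad₀ (hX i₀)⟩
  rw [dotProduct_add, dotProduct_mulVec, hXM] at hsum
  simp only [dotProduct_sub] at hsum ⊢
  linarith

lemma ne_smul_of_dotProduct_neg_of_pos {ι : Type*} [Fintype ι] {v w R : ι → ℝ} (hv : 0 ≤ v)
    (hw : 0 ≤ w) (hvR : R ⬝ᵥ v < 0) (hwR : 0 < R ⬝ᵥ w) (c : ℝ) : v ≠ c • w := by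
  intro h
  have hc : c < 0 := neg_of_mul_neg_left (by rwa [h, dotProduct_smul, smul_eq_mul] at hvR) hwR.le
  have hv0 : v = 0 := le_antisymm (h ▸ smul_nonpos_of_nonpos_of_nonneg hc.le hw) hv
  simp [hv0] at hvR

theorem gamma_equivalent_critical_tiltings_injective_general
    (K ℓ : ℕ) (μ : Fin K → (Fin K → ℕ) → ℝ)
    (hpos : ∀ i k, 0 ≤ μ i k) (hsum : ∀ i, HasSum (μ i) 1)
    (hent : ∀ i (x : Fin K → ℝ), Summable (fun k : Fin K → ℕ => μ i k * ∏ j, x j ^ k j))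
    (φ : Fin K → (Fin K → ℝ) → ℝ)
    (hφ : ∀ i x, φ i x = ∑' k : Fin K → ℕ, μ i k * ∏ j, x j ^ k j)
    (hnonloc : ∀ Z : Fin K → ℝ, Z ≠ 0 →
      ∃ (i : Fin K) (k k' : Fin K → ℕ), 0 < μ i k ∧ 0 < μ i k' ∧
        (∑ j, Z j * k j) ≠ (∑ j, Z j * k' j))
    (χ : (Fin K → ℝ) → Fin K → ℝ)
    (hχ : ∀ t i, χ t i = Real.log (φ i (fun j => Real.exp (t j))) - t i)
    -- the matrix Γ : nonzero, with nonnegative integer entries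
    (Γ : Matrix (Fin ℓ) (Fin K) ℤ) (hΓnonneg : ∀ a i, 0 ≤ Γ a i)
    -- two critical parameters θ, θ' with their tilted mean matrices
    (θ θ' : Fin K → ℝ)
    (Mθ Mθ' : Matrix (Fin K) (Fin K) ℝ)
    (hMθ : ∀ i j, Mθ i j =
      (∑' k : Fin K → ℕ, μ i k * Real.exp (∑ l, θ l * k l) * k j) /
        (∑' k : Fin K → ℕ, μ i k * Real.exp (∑ l, θ l * k l)))
    (hMθ' : ∀ i j, Mθ' i j =
      (∑' k : Fin K → ℕ, μ i k * Real.exp (∑ l, θ' l * k l) * k j) /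
        (∑' k : Fin K → ℕ, μ i k * Real.exp (∑ l, θ' l * k l)))
    -- the asymptotic directions
    (X X' : Fin K → ℝ)
    (hXpos : ∀ i, 0 < X i) (hXeig : Matrix.vecMul X Mθ = X)
    (hX'pos : ∀ i, 0 < X' i)
    (hX'eig : Matrix.vecMul X' Mθ' = X')
    -- Γ-equivalence: χ(θ) − χ(θ') ∈ Im(Γᵀ)
    (hequiv : ∃ R : Fin ℓ → ℝ, ∀ i, χ θ i - χ θ' i = ∑ a, (Γ a i : ℝ) * R a)
    -- Γ X_θ and Γ X_{θ'} are collinear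
    (hcol : ∃ lam : ℝ,
      (Γ.map (Int.cast : ℤ → ℝ)).mulVec X = lam • (Γ.map (Int.cast : ℤ → ℝ)).mulVec X'
      ∨ (Γ.map (Int.cast : ℤ → ℝ)).mulVec X' = lam • (Γ.map (Int.cast : ℤ → ℝ)).mulVec X) :
    θ = θ' := by
  by_contra hne
  have hent' : ∀ i, HasFiniteExpMoments (μ i) := fun i t => by
    simpa only [prod_exp_pow_eq_exp_sum] using hent i fun j => exp (t j)
  have hμpos : ∀ i, ∃ k, 0 < μ i k := fun i => exists_pos_of_hasSum (hpos i) (hsum i) one_ne_zero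
  have hχ' : ∀ t, χ t = logPartition μ t - t := fun t => funext fun i => by
    simp only [hχ, hφ, prod_exp_pow_eq_exp_sum, logPartition, partitionFn, Pi.sub_apply]
  have hlt := dotProduct_logPartition_sub_lt hpos hent' hμpos hnonloc hne hMθ hXpos hXeig
  have hlt' :=
    dotProduct_logPartition_sub_lt hpos hent' hμpos hnonloc (Ne.symm hne) hMθ' hX'pos hX'eig
  rw [← hχ', ← hχ'] at hlt hlt'
  obtain ⟨R, hR⟩ := hequiv
  set G := Γ.map (Int.cast : ℤ → ℝ)
  have hd : χ θ - χ θ' = R ᵥ* G := funext fun i => by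
    simp [hR, G, vecMul, dotProduct, mul_comm]
  have hRG : ∀ Y, R ⬝ᵥ (G *ᵥ Y) = Y ⬝ᵥ χ θ - Y ⬝ᵥ χ θ' := fun Y => by
    rw [dotProduct_mulVec, ← hd, dotProduct_comm, dotProduct_sub]
  have hG : ∀ Y : Fin K → ℝ, (∀ i, 0 < Y i) → 0 ≤ G *ᵥ Y := fun Y hY a =>
    show 0 ≤ ∑ i, G a i * Y i from
      Finset.sum_nonneg fun i _ => mul_nonneg (Int.cast_nonneg (hΓnonneg a i)) (hY i).le
  obtain ⟨c, hc | hc⟩ := hcol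
  · exact ne_smul_of_dotProduct_neg_of_pos (hG X hXpos) (hG X' hX'pos)
      (by linarith [hRG X]) (by linarith [hRG X']) c hc
  · exact ne_smul_of_dotProduct_neg_of_pos (R := -R) (hG X' hX'pos) (hG X hXpos)
      (by linarith [neg_dotProduct R (G *ᵥ X'), hRG X'])
      (by linarith [neg_dotProduct R (G *ᵥ X), hRG X]) c hc

/-- for an entire, finite, nondegenerate, nonlocalized,
irreducible projection `μ` and a nonzero integer matrix `Γ` with nonnegative
entries, if `θ` and `θ'` are both critical tilting parameters, are
`Γ`-equivalent (`χ(θ) − χ(θ') ∈ Im Γᵀ`), and `Γ X_θ`, `Γ X_{θ'}` are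
collinear, then `θ = θ'`. -/
theorem gamma_equivalent_critical_tiltings_injective
    (K ℓ : ℕ) (μ : Fin K → (Fin K → ℕ) → ℝ)
    (hpos : ∀ i k, 0 ≤ μ i k) (hsum : ∀ i, HasSum (μ i) 1)
    (hent : ∀ i (x : Fin K → ℝ), Summable (fun k : Fin K → ℕ => μ i k * ∏ j, x j ^ k j))
    (φ : Fin K → (Fin K → ℝ) → ℝ)
    (hφ : ∀ i x, φ i x = ∑' k : Fin K → ℕ, μ i k * ∏ j, x j ^ k j)
    (hfin : ∃ p : Fin K → ℝ, (∀ i, 0 < p i ∧ p i ≤ 1) ∧ ∀ i, φ i p = p i)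
    (hnondeg : ∃ (i : Fin K) (k : Fin K → ℕ), 2 ≤ ∑ j, k j ∧ 0 < μ i k)
    (hnonloc : ∀ Z : Fin K → ℝ, Z ≠ 0 →
      ∃ (i : Fin K) (k k' : Fin K → ℕ), 0 < μ i k ∧ 0 < μ i k' ∧
        (∑ j, Z j * k j) ≠ (∑ j, Z j * k' j))
    (M : Matrix (Fin K) (Fin K) ℝ)
    (hM : ∀ i j, M i j = ∑' k : Fin K → ℕ, μ i k * k j)
    (hirr : ∀ i j, ∃ m : ℕ, 0 < m ∧ 0 < (M ^ m) i j)
    (χ : (Fin K → ℝ) → Fin K → ℝ)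
    (hχ : ∀ t i, χ t i = Real.log (φ i (fun j => Real.exp (t j))) - t i)
    -- the matrix Γ : nonzero, with nonnegative integer entries
    (Γ : Matrix (Fin ℓ) (Fin K) ℤ) (hΓ : Γ ≠ 0) (hΓnonneg : ∀ a i, 0 ≤ Γ a i)
    -- two critical parameters θ, θ' with their tilted mean matrices
    (θ θ' : Fin K → ℝ)
    (Mθ Mθ' : Matrix (Fin K) (Fin K) ℝ)
    (hMθ : ∀ i j, Mθ i j =
      (∑' k : Fin K → ℕ, μ i k * Real.exp (∑ l, θ l * k l) * k j) /
        (∑' k : Fin K → ℕ, μ i k * Real.exp (∑ l, θ l * k l)))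
    (hMθ' : ∀ i j, Mθ' i j =
      (∑' k : Fin K → ℕ, μ i k * Real.exp (∑ l, θ' l * k l) * k j) /
        (∑' k : Fin K → ℕ, μ i k * Real.exp (∑ l, θ' l * k l)))
    (hcrit : matrixSpectralRadius Mθ = 1)
    (hcrit' : matrixSpectralRadius Mθ' = 1)
    -- the asymptotic directions
    (X X' : Fin K → ℝ)
    (hXpos : ∀ i, 0 < X i) (hXnorm : ∑ i, X i = 1) (hXeig : Matrix.vecMul X Mθ = X)
    (hX'pos : ∀ i, 0 < X' i) (hX'norm : ∑ i, X' i = 1)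
    (hX'eig : Matrix.vecMul X' Mθ' = X')
    -- Γ-equivalence: χ(θ) − χ(θ') ∈ Im(Γᵀ)
    (hequiv : ∃ R : Fin ℓ → ℝ, ∀ i, χ θ i - χ θ' i = ∑ a, (Γ a i : ℝ) * R a)
    -- Γ X_θ and Γ X_{θ'} are collinear
    (hcol : ∃ lam : ℝ,
      (Γ.map (Int.cast : ℤ → ℝ)).mulVec X = lam • (Γ.map (Int.cast : ℤ → ℝ)).mulVec X'
      ∨ (Γ.map (Int.cast : ℤ → ℝ)).mulVec X' = lam • (Γ.map (Int.cast : ℤ → ℝ)).mulVec X) :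
    θ = θ' :=
  gamma_equivalent_critical_tiltings_injective_general K ℓ μ hpos hsum hent φ hφ hnonloc χ hχ Γ
    hΓnonneg θ θ' Mθ Mθ' hMθ hMθ' X X' hXpos hXeig hX'pos hX'eig hequiv hcol
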